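/- arXiv:1909.12049 — 7 statements merged into one kernel-verified Lean document; each statement's English description precedes it below -/
import Mathlib

section
/- For ω ∈ (0,1) and all u,v ∈ ℝ, H(u,v;ω) = ∑_{n=1}^∞ (1-ω̄)^{n-1} ω̄ (F(z₁)F(z₂))^n where ω̄ = 1-ω, z₁ = u - log(1-ω), z₂ = v - log(1-ω). Equivalently, H(u,v;ω) equals the expectation of F(z₁)^M F(z₂)^M where M is geometric with success probability 1-ω on {1,2,...}. -/
noncomputable def amhH (ω u v : ℝ) : ℝ :=
  1 / (1 + Real.exp (-u) + Real.exp (-v) + (1 - ω) * Real.exp (-u - v))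

noncomputable def logisticF (u : ℝ) : ℝ := 1 / (1 + Real.exp (-u))

/-- The sum over n ∈ {1,2,...} is indexed by n = m+1 for m : ℕ. -/
theorem amh_geometric_mixture (ω : ℝ) (hω : ω ∈ Set.Ioo (0 : ℝ) 1) (u v : ℝ) :
    amhH ω u v = ∑' m : ℕ,
      (1 - (1 - ω)) ^ m * (1 - ω) *
        (logisticF (u - Real.log (1 - ω)) * logisticF (v - Real.log (1 - ω))) ^ (m + 1) := by
  obtain ⟨hω0, hω1⟩ := hω
  have ht0 : (0:ℝ) < 1 - ω := by linarith
  have hexp : Real.exp (Real.log (1 - ω)) = 1 - ω := Real.exp_log ht0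
  have heu : 0 < Real.exp (-u) := Real.exp_pos _
  have hev : 0 < Real.exp (-v) := Real.exp_pos _
  set A := 1 + (1 - ω) * Real.exp (-u) with hA
  set B := 1 + (1 - ω) * Real.exp (-v) with hB
  have hA1 : 1 < A := by nlinarith
  have hB1 : 1 < B := by nlinarith
  have hA0 : (0:ℝ) < A := by linarith
  have hB0 : (0:ℝ) < B := by linarith
  have hEu : Real.exp (-(u - Real.log (1 - ω))) = (1 - ω) * Real.exp (-u) := by
    rw [show -(u - Real.log (1 - ω)) = Real.log (1 - ω) + (-u) by ring, Real.exp_add, hexp]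
  have hEv : Real.exp (-(v - Real.log (1 - ω))) = (1 - ω) * Real.exp (-v) := by
    rw [show -(v - Real.log (1 - ω)) = Real.log (1 - ω) + (-v) by ring, Real.exp_add, hexp]
  have hFu : logisticF (u - Real.log (1 - ω)) = 1 / A := by rw [logisticF, hEu, hA]
  have hFv : logisticF (v - Real.log (1 - ω)) = 1 / B := by rw [logisticF, hEv, hB]
  set a := 1 / (A * B) with ha
  have ha0 : 0 < a := by positivity
  have ha1 : a < 1 := by
    rw [ha, div_lt_one (by positivity)]
    nlinarith
  have hr0 : 0 ≤ ω * a := by positivity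
  have hr1 : ω * a < 1 := by nlinarith
  have hterm : ∀ m : ℕ, (1 - (1 - ω)) ^ m * (1 - ω) *
      (logisticF (u - Real.log (1 - ω)) * logisticF (v - Real.log (1 - ω))) ^ (m + 1)
      = ((1 - ω) * a) * (ω * a) ^ m := by
    intro m
    rw [hFu, hFv, div_mul_div_comm, one_mul, ← ha, pow_succ, mul_pow]
    ring
  rw [tsum_congr hterm, tsum_mul_left, tsum_geometric_of_lt_one hr0 hr1]
  have hABpos : 0 < A * B - ω := by nlinarith
  have hden : 0 < 1 + Real.exp (-u) + Real.exp (-v) + (1 - ω) * Real.exp (-u - v) := by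
    have := Real.exp_pos (-u - v); nlinarith
  rw [amhH, ha]
  have hEuv : Real.exp (-u - v) = Real.exp (-u) * Real.exp (-v) := by
    rw [← Real.exp_add]; ring_nf
  rw [hEuv] at hden ⊢
  have h1 : 1 - ω * (1 / (A * B)) = (A * B - ω) / (A * B) := by field_simp
  have h2 : (1 - ω) * (1 / (A * B)) * ((A * B - ω) / (A * B))⁻¹ = (1 - ω) / (A * B - ω) := by
    field_simp
  rw [h1, h2, div_eq_div_iff hden.ne' hABpos.ne', hA, hB]
  ring
end

section
/- For fixed ω ∈ (0,1), the function (θ,τ) ↦ ρ_AMH(θ,τ;ω) = ω/[(e^{θ/2}+e^{-θ/2})(e^{τ/2}+e^{-τ/2}) - ω e^{-θ/2-τ/2}] attains its global maximum at θ = τ = (1/2)log(1-ω), with maximum value (ω/2)·1/(1+√(1-ω)). -/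
noncomputable def rhoAMH (ω θ τ : ℝ) : ℝ :=
  ω / ((Real.exp (θ / 2) + Real.exp (-θ / 2)) * (Real.exp (τ / 2) + Real.exp (-τ / 2))
        - ω * Real.exp (-θ / 2 - τ / 2))

/-!
With `s = θ / 2` and `t = τ / 2`, the denominator of `rhoAMH` equals
`exp (s + t) + (1 - ω) exp (-(s + t)) + 2 cosh (s - t)`.
By AM-GM the first two terms are at least `2 √(1 - ω)`, with equality when
`s + t = log (1 - ω) / 2`, and the cosh term is at least `2`, with equality when `s = t`.
-/

open Real

lemma rhoAMH_eq (ω θ τ : ℝ) :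
    rhoAMH ω θ τ = ω / (exp ((θ + τ) / 2) + (1 - ω) * exp (-((θ + τ) / 2))
      + 2 * cosh ((θ - τ) / 2)) := by
  have hdenom : (exp (θ / 2) + exp (-θ / 2)) * (exp (τ / 2) + exp (-τ / 2))
      - ω * exp (-θ / 2 - τ / 2) = exp ((θ + τ) / 2) + (1 - ω) * exp (-((θ + τ) / 2))
      + 2 * cosh ((θ - τ) / 2) := by
    simp only [cosh_eq, add_div, sub_div, neg_add, neg_div, exp_add, exp_sub, exp_neg]
    field_simp
    ring
  rw [rhoAMH, hdenom]

lemma two_mul_sqrt_le_exp_add_mul_exp_neg {c : ℝ} (hc : 0 ≤ c) (u : ℝ) :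
    2 * √c ≤ exp u + c * exp (-u) := by
  have hsq : exp u + c * exp (-u) - 2 * √c = (exp (u / 2) - √c * exp (-u / 2)) ^ 2 := by
    have hexp : exp u = exp (u / 2) ^ 2 := by rw [← exp_nat_mul]; ring_nf
    have hexp_neg : exp (-u) = exp (-u / 2) ^ 2 := by rw [← exp_nat_mul]; ring_nf
    have hprod : exp (u / 2) * exp (-u / 2) = 1 := by rw [← exp_add]; ring_nf; exact exp_zero
    rw [hexp, hexp_neg]
    linear_combination (2 * √c) * hprod - exp (-u / 2) ^ 2 * sq_sqrt hc
  linarith [sq_nonneg (exp (u / 2) - √c * exp (-u / 2))]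

lemma exp_add_mul_exp_neg_half_log {c : ℝ} (hc : 0 < c) :
    exp (log c / 2) + c * exp (-(log c / 2)) = 2 * √c := by
  have hsqrt : exp (log c / 2) = √c := by rw [exp_half, exp_log hc]
  rw [exp_neg, hsqrt]
  field_simp
  rw [sq_sqrt hc.le]
  ring

lemma rhoAMH_le {ω : ℝ} (hω0 : 0 ≤ ω) (hω1 : ω ≤ 1) (θ τ : ℝ) :
    rhoAMH ω θ τ ≤ ω / (2 * √(1 - ω) + 2) := by
  rw [rhoAMH_eq]
  have hamgm := two_mul_sqrt_le_exp_add_mul_exp_neg (sub_nonneg.mpr hω1) ((θ + τ) / 2)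
  have hcosh := one_le_cosh ((θ - τ) / 2)
  apply div_le_div_of_nonneg_left hω0 (by positivity)
  linarith

lemma rhoAMH_half_log_self {ω : ℝ} (hω1 : ω < 1) :
    rhoAMH ω ((1 / 2) * log (1 - ω)) ((1 / 2) * log (1 - ω)) = ω / (2 * √(1 - ω) + 2) := by
  have hsum : ((1 / 2) * log (1 - ω) + (1 / 2) * log (1 - ω)) / 2 = log (1 - ω) / 2 := by ring
  rw [rhoAMH_eq, hsum, exp_add_mul_exp_neg_half_log (sub_pos.mpr hω1)]
  simp

theorem amh_correlation_max (ω : ℝ) (hω : ω ∈ Set.Ioo (0 : ℝ) 1) :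
    (∀ θ τ : ℝ, rhoAMH ω θ τ ≤
      rhoAMH ω ((1 / 2) * Real.log (1 - ω)) ((1 / 2) * Real.log (1 - ω))) ∧
    rhoAMH ω ((1 / 2) * Real.log (1 - ω)) ((1 / 2) * Real.log (1 - ω))
      = (ω / 2) * (1 / (1 + Real.sqrt (1 - ω))) := by
  obtain ⟨hω0, hω1⟩ := hω
  rw [rhoAMH_half_log_self hω1]
  refine ⟨rhoAMH_le hω0.le hω1.le, ?_⟩
  have hpos : 0 < 1 + √(1 - ω) := by positivity
  field_simp
  ring
end

section
/- For all θ, τ ∈ ℝ and ω ∈ [-1,1], the AMH binary correlation satisfies -1/(2(1+√2)) ≤ ρ_AMH(θ,τ;ω) ≤ 1/2. -/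
theorem amh_correlation_bounds (ω : ℝ) (hω : ω ∈ Set.Icc (-1 : ℝ) 1) (θ τ : ℝ) :
    -1 / (2 * (1 + Real.sqrt 2)) ≤ rhoAMH ω θ τ ∧ rhoAMH ω θ τ ≤ 1 / 2 := by
  obtain ⟨h1, h2⟩ := hω
  set x := Real.exp (θ / 2) with hxdef
  set y := Real.exp (τ / 2) with hydef
  have hx0 : 0 < x := Real.exp_pos _
  have hy0 : 0 < y := Real.exp_pos _
  have hxy0 : 0 < x * y := mul_pos hx0 hy0
  have hex : Real.exp (-θ / 2) = x⁻¹ := by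
    rw [show -θ / 2 = -(θ / 2) by ring, Real.exp_neg]
  have hey : Real.exp (-τ / 2) = y⁻¹ := by
    rw [show -τ / 2 = -(τ / 2) by ring, Real.exp_neg]
  have hexy : Real.exp (-θ / 2 - τ / 2) = (x * y)⁻¹ := by
    rw [show -θ / 2 - τ / 2 = -(θ / 2 + τ / 2) by ring, Real.exp_neg, Real.exp_add]
  set N : ℝ := x ^ 2 * y ^ 2 + x ^ 2 + y ^ 2 + 1 - ω with hN
  have hNpos : 0 < N := by nlinarith [sq_nonneg (x * y), sq_nonneg x, sq_nonneg y]
  have hDval : rhoAMH ω θ τ = ω * (x * y) / N := by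
    unfold rhoAMH
    rw [hex, hey, hexy, ← hxdef, ← hydef]
    rw [show (x + x⁻¹) * (y + y⁻¹) - ω * (x * y)⁻¹ = N / (x * y) by
      field_simp; ring]
    rw [div_div_eq_mul_div]
  set r := Real.sqrt 2 with hr
  have hr2 : r ^ 2 = 2 := Real.sq_sqrt (by norm_num)
  have hr0 : 1 ≤ r := by
    nlinarith [Real.sqrt_nonneg 2]
  have h2r : (0:ℝ) < 2 * (1 + r) := by linarith
  constructor
  · rw [hDval, div_le_div_iff₀ h2r hNpos]
    rcases le_or_gt 1 (2 * (1 + r) * (x * y)) with h | h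
    · nlinarith [sq_nonneg (x - y), sq_nonneg (x * y - r),
        mul_nonneg (by linarith : (0:ℝ) ≤ 1 + ω) (by linarith : (0:ℝ) ≤ 2 * (1 + r) * (x * y) - 1)]
    · nlinarith [mul_nonneg (by linarith : (0:ℝ) ≤ 1 - ω)
        (by linarith : (0:ℝ) ≤ 1 - 2 * (1 + r) * (x * y)),
        mul_pos h2r hxy0, sq_nonneg (x * y), sq_nonneg x, sq_nonneg y]
  · rw [hDval, div_le_div_iff₀ hNpos (by norm_num : (0:ℝ) < 2)]
    nlinarith [sq_nonneg (x - y), sq_nonneg (x * y),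
      mul_nonneg (by linarith : (0:ℝ) ≤ 1 - ω) hxy0.le]
end

section
/- For ω ∈ (-1,1) and all θ, τ_k ∈ ℝ, the global odds ratio ψ_k = H(θ,τ_k)[1 - F(θ) - F(τ_k) + H(θ,τ_k)] / ([F(θ)-H(θ,τ_k)][F(τ_k)-H(θ,τ_k)]) with H = H(·,·;ω) the AMH cdf equals [1 - ω² F(θ - log(1-ω)) F(τ_k - log(1-ω))] / (1-ω). -/
set_option maxHeartbeats 1000000


theorem amh_global_odds_ratio (ω : ℝ) (hω : ω ∈ Set.Ioo (-1 : ℝ) 1) (θ τ : ℝ) :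
    amhH ω θ τ * (1 - logisticF θ - logisticF τ + amhH ω θ τ) /
        ((logisticF θ - amhH ω θ τ) * (logisticF τ - amhH ω θ τ))
      = (1 - ω ^ 2 * logisticF (θ - Real.log (1 - ω)) * logisticF (τ - Real.log (1 - ω)))
          / (1 - ω) := by
  obtain ⟨h1, h2⟩ := hω
  have hw : (0:ℝ) < 1 - ω := by linarith
  have hapos : (0:ℝ) < Real.exp (-θ) := Real.exp_pos _
  have hbpos : (0:ℝ) < Real.exp (-τ) := Real.exp_pos _
  set a := Real.exp (-θ) with ha
  set b := Real.exp (-τ) with hb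
  have hab : Real.exp (-θ - τ) = a * b := by
    rw [ha, hb, ← Real.exp_add]; ring_nf
  have hea : Real.exp (-(θ - Real.log (1 - ω))) = (1 - ω) * a := by
    rw [neg_sub, Real.exp_sub, Real.exp_log hw, ha, Real.exp_neg]
    ring
  have heb : Real.exp (-(τ - Real.log (1 - ω))) = (1 - ω) * b := by
    rw [neg_sub, Real.exp_sub, Real.exp_log hw, hb, Real.exp_neg]
    ring
  have hD : (0:ℝ) < 1 + a + b + (1 - ω) * (a * b) := by positivity
  have h1a : (0:ℝ) < 1 + a := by linarith
  have h1b : (0:ℝ) < 1 + b := by linarith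
  have hFa : logisticF θ - amhH ω θ τ
      = (b * (1 + (1 - ω) * a)) / ((1 + a) * (1 + a + b + (1 - ω) * (a * b))) := by
    unfold logisticF amhH
    rw [hab, ← ha, ← hb]
    field_simp
    ring
  have hFb : logisticF τ - amhH ω θ τ
      = (a * (1 + (1 - ω) * b)) / ((1 + b) * (1 + a + b + (1 - ω) * (a * b))) := by
    unfold logisticF amhH
    rw [hab, ← ha, ← hb]
    field_simp
    ring
  have hS : 1 - logisticF θ - logisticF τ + amhH ω θ τ
      = (a * b * (1 + ω + a + b + (1 - ω) * (a * b))) /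
        ((1 + a) * (1 + b) * (1 + a + b + (1 - ω) * (a * b))) := by
    unfold logisticF amhH
    rw [hab, ← ha, ← hb]
    field_simp
    ring
  rw [hFa, hFb, hS]
  unfold logisticF amhH
  rw [hab, hea, heb, ← ha, ← hb]
  have h1wa : (0:ℝ) < 1 + (1 - ω) * a := by positivity
  have h1wb : (0:ℝ) < 1 + (1 - ω) * b := by positivity
  field_simp
  ring
end

section
/- For fixed ω ∈ (0,1), the odds ratio ψ(θ,τ) = [1 - ω² F(θ-log(1-ω)) F(τ-log(1-ω))]/(1-ω) satisfies 1+ω < ψ(θ,τ) < 1/(1-ω) for all θ,τ ∈ ℝ, and these bounds are sharp (they are the infimum and supremum over (θ,τ) ∈ ℝ²). -/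
noncomputable def psiOR (ω θ τ : ℝ) : ℝ :=
  (1 - ω ^ 2 * logisticF (θ - Real.log (1 - ω)) * logisticF (τ - Real.log (1 - ω)))
    / (1 - ω)

/-! ψ is a decreasing affine function of the product `F(θ - c) F(τ - c)`, `c = log (1 - ω)`.
Since `F` maps `ℝ` onto `(0, 1)`, so does that product, hence the range of ψ is the open interval
between its values at product `1` (namely `1 + ω`) and product `0` (namely `1 / (1 - ω)`). -/

open Set

theorem Set.image_affine_Ioo_of_neg {K : Type*} [Field K] [LinearOrder K] [IsStrictOrderedRing K]
    {a : K} (h : a < 0) (b c d : K) :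
    (fun x => a * x + d) '' Ioo b c = Ioo (a * c + d) (a * b + d) := by
  have hcomp : (fun x => a * x + d) = (fun y => -a * y + d) ∘ Neg.neg := by
    funext x; simp
  rw [hcomp, image_comp, image_neg_Ioo, image_affine_Ioo (neg_pos.2 h)]
  simp

theorem Real.image2_mul_Ioo_zero_one : image2 (· * ·) (Ioo 0 1) (Ioo 0 1) = Ioo (0 : ℝ) 1 := by
  apply Subset.antisymm
  · rintro _ ⟨p, ⟨hp0, hp1⟩, q, ⟨hq0, hq1⟩, rfl⟩
    exact ⟨mul_pos hp0 hq0, mul_lt_one_of_nonneg_of_lt_one_left hp0.le hp1 hq1.le⟩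
  · intro p ⟨hp0, hp1⟩
    have hsqrt : √p ∈ Ioo 0 1 :=
      ⟨Real.sqrt_pos.2 hp0, (Real.sqrt_lt' one_pos).2 (by rwa [one_pow])⟩
    exact ⟨√p, hsqrt, √p, hsqrt, Real.mul_self_sqrt hp0.le⟩

theorem logisticF_eq_sigmoid : logisticF = Real.sigmoid := by
  funext u
  rw [logisticF, Real.sigmoid_def, one_div]

theorem range_logisticF_sub (c : ℝ) : range (fun θ => logisticF (θ - c)) = Ioo 0 1 := by
  rw [← Real.range_sigmoid, logisticF_eq_sigmoid]
  exact (Equiv.subRight c).surjective.range_comp Real.sigmoid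

theorem psiOR_eq_affine (ω θ τ : ℝ) :
    psiOR ω θ τ = -(ω ^ 2 / (1 - ω)) *
      (logisticF (θ - Real.log (1 - ω)) * logisticF (τ - Real.log (1 - ω))) + 1 / (1 - ω) := by
  rw [psiOR]; ring

theorem setOf_psiOR_eq_Ioo {ω : ℝ} (hω : ω ∈ Ioo (0 : ℝ) 1) :
    {x : ℝ | ∃ θ τ : ℝ, psiOR ω θ τ = x} = Ioo (1 + ω) (1 / (1 - ω)) := by
  have h1ω : 1 - ω ≠ 0 := (sub_pos.2 hω.2).ne'
  have hslope : -(ω ^ 2 / (1 - ω)) < 0 :=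
    neg_neg_of_pos (div_pos (pow_pos hω.1 2) (sub_pos.2 hω.2))
  have hset : {x : ℝ | ∃ θ τ : ℝ, psiOR ω θ τ = x} =
      (fun p => -(ω ^ 2 / (1 - ω)) * p + 1 / (1 - ω)) ''
        image2 (· * ·) (range fun θ => logisticF (θ - Real.log (1 - ω)))
          (range fun τ => logisticF (τ - Real.log (1 - ω))) := by
    simp only [image2_range, ← range_comp]
    ext x
    simp [psiOR_eq_affine]
  rw [hset, range_logisticF_sub, Real.image2_mul_Ioo_zero_one,
    image_affine_Ioo_of_neg hslope]
  congr 1 <;> field_simp <;> ring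

theorem odds_ratio_sharp_bounds (ω : ℝ) (hω : ω ∈ Set.Ioo (0 : ℝ) 1) :
    (∀ θ τ : ℝ, 1 + ω < psiOR ω θ τ ∧ psiOR ω θ τ < 1 / (1 - ω)) ∧
    IsGLB {x : ℝ | ∃ θ τ : ℝ, psiOR ω θ τ = x} (1 + ω) ∧
    IsLUB {x : ℝ | ∃ θ τ : ℝ, psiOR ω θ τ = x} (1 / (1 - ω)) := by
  have hset := setOf_psiOR_eq_Ioo hω
  have hlt : 1 + ω < 1 / (1 - ω) := by
    rw [lt_div_iff₀ (sub_pos.2 hω.2)]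
    nlinarith [hω.1]
  refine ⟨fun θ τ => ?_, hset ▸ isGLB_Ioo hlt, hset ▸ isLUB_Ioo hlt⟩
  rw [← mem_Ioo, ← hset]
  exact ⟨θ, τ, rfl⟩
end

section
/- If (u_i) are i.i.d. random variables with standard logistic cdf F(u) = 1/(1+e^{-u}) and M is an independent geometric random variable on {1,2,...} with success probability π ∈ (0,1), then max_{i≤M} u_i has cdf u ↦ F(u + log π), i.e. is logistic with location -log π. -/
theorem tsum_geometric_mul_pow_succ {K : Type*} [NormedField K] [CompleteSpace K]
    {q x : K} (p : K) (h : ‖q * x‖ < 1) :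
    ∑' m : ℕ, q ^ m * p * x ^ (m + 1) = p * x * (1 - q * x)⁻¹ := by
  rw [← tsum_geometric_of_norm_lt_one h, ← tsum_mul_left]
  congr 1 with m
  ring

theorem logisticF_pos (u : ℝ) : 0 < logisticF u := by
  unfold logisticF
  positivity

theorem logisticF_lt_one (u : ℝ) : logisticF u < 1 := by
  unfold logisticF
  rw [div_lt_one (by positivity)]
  linarith [Real.exp_pos (-u)]

theorem logisticF_sub_log_one_div {π : ℝ} (hπ : 0 < π) (u : ℝ) :
    logisticF (u - Real.log (1 / π)) = π * logisticF u * (1 - (1 - π) * logisticF u)⁻¹ := by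
  have hexp : Real.exp (-(u - Real.log (1 / π))) = Real.exp (-u) / π := by
    rw [neg_sub, Real.exp_sub, Real.exp_log (by positivity), Real.exp_neg]
    field_simp
  have he := Real.exp_pos (-u)
  unfold logisticF
  rw [hexp]
  have hden : 1 + Real.exp (-u) - (1 - π) = π + Real.exp (-u) := by ring
  field_simp
  rw [hden, div_self (by positivity)]

/-- The cdf of the geometric maximum of i.i.d. logistic variables,
E[F(u)^M] = ∑_{n≥1} (1-π)^{n-1} π F(u)^n, equals F(u + log π). -/
theorem logistic_geometric_max (π : ℝ) (hπ : π ∈ Set.Ioo (0 : ℝ) 1) (u : ℝ) :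
    (∑' m : ℕ, (1 - π) ^ m * π * logisticF u ^ (m + 1))
      = logisticF (u - Real.log (1 / π)) := by
  obtain ⟨hπ0, hπ1⟩ := hπ
  have hF0 := logisticF_pos u
  have hF1 := logisticF_lt_one u
  have hratio : ‖(1 - π) * logisticF u‖ < 1 := by
    rw [Real.norm_of_nonneg (by nlinarith)]
    nlinarith
  rw [tsum_geometric_mul_pow_succ π hratio, logisticF_sub_log_one_div hπ0]
end

section
/- For every ω ∈ [-1,1], the AMH function H(u,v;ω) = 1/(1+e^{-u}+e^{-v}+(1-ω)e^{-u-v}) is 2-increasing: for all u₁ ≤ u₂ and v₁ ≤ v₂, H(u₂,v₂) - H(u₁,v₂) - H(u₂,v₁) + H(u₁,v₁) ≥ 0. -/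
theorem amh_two_increasing (ω : ℝ) (hω : ω ∈ Set.Icc (-1 : ℝ) 1)
    (u₁ u₂ v₁ v₂ : ℝ) (hu : u₁ ≤ u₂) (hv : v₁ ≤ v₂) :
    0 ≤ amhH ω u₂ v₂ - amhH ω u₁ v₂ - amhH ω u₂ v₁ + amhH ω u₁ v₁ := by
  obtain ⟨hω1, hω2⟩ := hω
  set c : ℝ := 1 - ω with hc
  have hc0 : 0 ≤ c := by simp only [hc]; linarith
  have hc2 : c ≤ 2 := by simp only [hc]; linarith
  set a₁ : ℝ := Real.exp (-u₁) with ha₁d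
  set a₂ : ℝ := Real.exp (-u₂) with ha₂d
  set b₁ : ℝ := Real.exp (-v₁) with hb₁d
  set b₂ : ℝ := Real.exp (-v₂) with hb₂d
  have ha₁ : 0 < a₁ := Real.exp_pos _
  have ha₂ : 0 < a₂ := Real.exp_pos _
  have hb₁ : 0 < b₁ := Real.exp_pos _
  have hb₂ : 0 < b₂ := Real.exp_pos _
  have ha : a₂ ≤ a₁ := Real.exp_le_exp.2 (by linarith)
  have hb : b₂ ≤ b₁ := Real.exp_le_exp.2 (by linarith)
  have e11 : Real.exp (-u₁ - v₁) = a₁ * b₁ := by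
    rw [show -u₁ - v₁ = -u₁ + -v₁ by ring, Real.exp_add]
  have e12 : Real.exp (-u₁ - v₂) = a₁ * b₂ := by
    rw [show -u₁ - v₂ = -u₁ + -v₂ by ring, Real.exp_add]
  have e21 : Real.exp (-u₂ - v₁) = a₂ * b₁ := by
    rw [show -u₂ - v₁ = -u₂ + -v₁ by ring, Real.exp_add]
  have e22 : Real.exp (-u₂ - v₂) = a₂ * b₂ := by
    rw [show -u₂ - v₂ = -u₂ + -v₂ by ring, Real.exp_add]
  have hD : ∀ a b : ℝ, 0 < a → 0 < b → 0 < 1 + a + b + c * (a * b) := by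
    intro a b ha hb
    have := mul_nonneg hc0 (mul_nonneg ha.le hb.le)
    linarith
  have d11 := hD a₁ b₁ ha₁ hb₁
  have d12 := hD a₁ b₂ ha₁ hb₂
  have d21 := hD a₂ b₁ ha₂ hb₁
  have d22 := hD a₂ b₂ ha₂ hb₂
  -- the key fraction comparison
  have hG : 0 ≤ (2 - c) + (b₁ + b₂ + c * (b₁ * b₂))
      + (a₁ + a₂ + c * (a₁ * a₂))
      + c * (a₁ * b₁ + a₁ * b₂ + a₂ * b₁ + a₂ * b₂)
      + c ^ 2 * (a₁ * a₂ * b₁ + a₁ * a₂ * b₂ + a₁ * b₁ * b₂ + a₂ * b₁ * b₂)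
      + c ^ 3 * (a₁ * a₂ * b₁ * b₂) := by
    have h1 : 0 ≤ c * (b₁ * b₂) := mul_nonneg hc0 (by positivity)
    have h2 : 0 ≤ c * (a₁ * a₂) := mul_nonneg hc0 (by positivity)
    have h3 : 0 ≤ c * (a₁ * b₁ + a₁ * b₂ + a₂ * b₁ + a₂ * b₂) :=
      mul_nonneg hc0 (by positivity)
    have h4 : 0 ≤ c ^ 2 * (a₁ * a₂ * b₁ + a₁ * a₂ * b₂ + a₁ * b₁ * b₂ + a₂ * b₁ * b₂) := by
      positivity
    have h5 : 0 ≤ c ^ 3 * (a₁ * a₂ * b₁ * b₂) :=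
      mul_nonneg (pow_nonneg hc0 3) (by positivity)
    linarith
  have hid : (1 + c * b₂) * ((1 + a₁ + b₁ + c * (a₁ * b₁)) * (1 + a₂ + b₁ + c * (a₂ * b₁)))
      - (1 + c * b₁) * ((1 + a₁ + b₂ + c * (a₁ * b₂)) * (1 + a₂ + b₂ + c * (a₂ * b₂)))
      = (b₁ - b₂) * ((2 - c) + (b₁ + b₂ + c * (b₁ * b₂))
      + (a₁ + a₂ + c * (a₁ * a₂))
      + c * (a₁ * b₁ + a₁ * b₂ + a₂ * b₁ + a₂ * b₂)
      + c ^ 2 * (a₁ * a₂ * b₁ + a₁ * a₂ * b₂ + a₁ * b₁ * b₂ + a₂ * b₁ * b₂)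
      + c ^ 3 * (a₁ * a₂ * b₁ * b₂)) := by ring
  have hfrac : (1 + c * b₁) / ((1 + a₁ + b₁ + c * (a₁ * b₁)) * (1 + a₂ + b₁ + c * (a₂ * b₁)))
      ≤ (1 + c * b₂) / ((1 + a₁ + b₂ + c * (a₁ * b₂)) * (1 + a₂ + b₂ + c * (a₂ * b₂))) := by
    rw [div_le_div_iff₀ (by positivity) (by positivity)]
    have := mul_nonneg (by linarith : (0:ℝ) ≤ b₁ - b₂) hG
    linarith
  have e1 : amhH ω u₂ v₂ - amhH ω u₁ v₂ = (a₁ - a₂) *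
      ((1 + c * b₂) / ((1 + a₁ + b₂ + c * (a₁ * b₂)) * (1 + a₂ + b₂ + c * (a₂ * b₂)))) := by
    unfold amhH
    rw [e12, e22, ← hc, ← ha₁d, ← ha₂d, ← hb₂d]
    rw [mul_div_assoc']
    rw [div_sub_div _ _ (by positivity) (by positivity), div_eq_div_iff (by positivity) (by positivity)]
    ring
  have e2 : amhH ω u₂ v₁ - amhH ω u₁ v₁ = (a₁ - a₂) *
      ((1 + c * b₁) / ((1 + a₁ + b₁ + c * (a₁ * b₁)) * (1 + a₂ + b₁ + c * (a₂ * b₁)))) := by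
    unfold amhH
    rw [e11, e21, ← hc, ← ha₁d, ← ha₂d, ← hb₁d]
    rw [mul_div_assoc']
    rw [div_sub_div _ _ (by positivity) (by positivity), div_eq_div_iff (by positivity) (by positivity)]
    ring
  have hmul := mul_le_mul_of_nonneg_left hfrac (by linarith : (0:ℝ) ≤ a₁ - a₂)
  linarith
end
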